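/- Let $L_1$ be the $k \times k$ lower bidiagonal matrix with $1$ on the diagonal and $-1$ on the subdiagonal (i.e., $(L_1)_{ii}=1$, $(L_1)_{i,i-1}=-1$, all other entries zero), with $k \ge 2$. Then there exists no inner product $\langle\cdot,\cdot\rangle$ on $\mathbb{R}^k$ such that $\langle L_1 v, v\rangle \ge \langle v, v\rangle$ for all $v \in \mathbb{R}^k$. -/

import Mathlib

/-!
Since `L₁ = 1 - S` with `S` the subdiagonal shift, the inequality says `⟪S v, v⟫ ≤ 0` for all `v`.
But `S e_{k-2} = e_{k-1}` and `S e_{k-1} = 0`, so on `v = e_{k-2} + t e_{k-1}` we get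
`⟪S v, v⟫ = ⟪e_{k-1}, e_{k-2}⟫ + t ⟪e_{k-1}, e_{k-1}⟫`, which is positive for large `t`.
-/

open Matrix

namespace Matrix

theorem PosDef.exists_mulVec_dotProduct_mulVec_pos {n : Type*} [Fintype n]
    {G M : Matrix n n ℝ} (hG : G.PosDef) {u w : n → ℝ} (hw : w ≠ 0)
    (hu : M *ᵥ u = w) (hMw : M *ᵥ w = 0) : ∃ v, 0 < (M *ᵥ v) ⬝ᵥ G *ᵥ v := by
  have hww : 0 < w ⬝ᵥ G *ᵥ w := by simpa using hG.dotProduct_mulVec_pos hw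
  set t := (1 - w ⬝ᵥ G *ᵥ u) / (w ⬝ᵥ G *ᵥ w)
  refine ⟨u + t • w, ?_⟩
  have hMv : M *ᵥ (u + t • w) = w := by
    rw [mulVec_add, mulVec_smul, hu, hMw, smul_zero, add_zero]
  have hval : w ⬝ᵥ G *ᵥ (u + t • w) = 1 := by
    rw [mulVec_add, mulVec_smul, dotProduct_add, dotProduct_smul, smul_eq_mul,
      div_mul_cancel₀ _ hww.ne']
    ring
  rw [hMv, hval]
  exact one_pos

def subdiagShift (R : Type*) [Zero R] [One R] (k : ℕ) : Matrix (Fin k) (Fin k) R :=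
  of fun i j => if (j : ℕ) + 1 = i then 1 else 0

variable {R : Type*} [NonAssocSemiring R] {k : ℕ}

theorem subdiagShift_mulVec_single_of_succ {j j' : Fin k} (h : (j : ℕ) + 1 = j') :
    subdiagShift R k *ᵥ Pi.single j 1 = Pi.single j' 1 := by
  ext i
  simp only [mulVec_single_one, col_apply, subdiagShift, of_apply, Pi.single_apply, h,
    Fin.val_inj, eq_comm]

theorem subdiagShift_mulVec_single_last {j : Fin k} (h : (j : ℕ) + 1 = k) :
    subdiagShift R k *ᵥ Pi.single j 1 = 0 := by
  ext i
  have : (j : ℕ) + 1 ≠ i := by omega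
  simp [subdiagShift, this]

end Matrix

theorem one_sub_eq_subdiagShift {R : Type*} [Ring R] {k : ℕ} {L1 : Matrix (Fin k) (Fin k) R}
    (hL1 : ∀ i j : Fin k,
      L1 i j = if i = j then 1 else if (j : ℕ) + 1 = (i : ℕ) then -1 else 0) :
    1 - L1 = subdiagShift R k := by
  ext i j
  rw [Matrix.sub_apply, one_apply, hL1, subdiagShift, of_apply]
  split_ifs <;> simp_all

open Matrix in
/-- The `k × k` lower bidiagonal matrix with `1` on the diagonal and `-1`
on the subdiagonal admits no inner product (given by a positive definite
Grammian matrix `G`) with `⟪L₁ v, v⟫ ≥ ⟪v, v⟫` for all `v`, when `k ≥ 2`. -/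
theorem stmt_0 (k : ℕ) (hk : 2 ≤ k)
    (L1 : Matrix (Fin k) (Fin k) ℝ)
    (hL1 : ∀ i j : Fin k,
      L1 i j = if i = j then 1 else if (j : ℕ) + 1 = (i : ℕ) then -1 else 0) :
    ¬ ∃ G : Matrix (Fin k) (Fin k) ℝ, G.PosDef ∧
        ∀ v : Fin k → ℝ, v ⬝ᵥ G.mulVec v ≤ (L1.mulVec v) ⬝ᵥ G.mulVec v := by
  rintro ⟨G, hG, hle⟩
  let a : Fin k := ⟨k - 2, by omega⟩
  let b : Fin k := ⟨k - 1, by omega⟩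
  have hS := one_sub_eq_subdiagShift hL1
  have hab : (1 - L1) *ᵥ Pi.single a 1 = Pi.single b 1 := by
    rw [hS]
    exact subdiagShift_mulVec_single_of_succ (by simp only [a, b]; omega)
  have hb : (1 - L1) *ᵥ Pi.single b 1 = 0 := by
    rw [hS]
    exact subdiagShift_mulVec_single_last (by simp only [b]; omega)
  obtain ⟨v, hv⟩ :=
    hG.exists_mulVec_dotProduct_mulVec_pos (Pi.single_ne_zero_iff.mpr one_ne_zero) hab hb
  rw [sub_mulVec, one_mulVec, sub_dotProduct] at hv
  linarith [hle v]
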